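/- Let H be a Hilbert space and q a densely defined, closed, positive, symmetric sesquilinear form on H. Then there exists a unique densely defined, self-adjoint, positive operator Q with domain contained in dom(q) such that q[u, v] = ⟨Q u, v⟩ for all u ∈ dom(Q) and v ∈ dom(q) (the Friedrichs extension). -/

import Mathlib

/-!
The form inner product `⟪u, v⟫ + q u v` turns the form domain into a Hilbert space `F`
(closedness of `q` is exactly completeness), and the inclusion `J : F → H` is bounded with
dense range. Then `R = J J†` is a bounded injective operator with dense range, characterised by
`⟪R f, v⟫ + q (R f) v = ⟪f, v⟫` for `v ∈ dom q`, so `Q = R⁻¹ - 1` on `range R` represents `q`.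
An operator representing a symmetric form is symmetric, and `Q + 1 = R⁻¹` is onto, so `Q` is
self-adjoint. Two self-adjoint operators representing `q` are formal adjoints of each other,
hence equal.
-/

open scoped ComplexConjugate

namespace LinearPMap

variable {𝕜 E : Type*} [RCLike 𝕜] [NormedAddCommGroup E] [InnerProductSpace 𝕜 E] [CompleteSpace E]

theorem IsFormalAdjoint.isSelfAdjoint {A : E →ₗ.[𝕜] E} (hsymm : A.IsFormalAdjoint A)
    (hdense : Dense (A.domain : Set E)) (hsurj : ∀ g : E, ∃ x : A.domain, A x + x = g) :
    IsSelfAdjoint A := by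
  have hle : A ≤ A.adjoint := hsymm.le_adjoint hdense
  have hadj : A.adjoint.IsFormalAdjoint A := adjoint_isFormalAdjoint hdense
  have hdom : A.adjoint.domain ≤ A.domain := by
    intro w hw
    obtain ⟨x, hx⟩ := hsurj (w + A.adjoint ⟨w, hw⟩)
    -- `w - x` is orthogonal to the range of `A + 1`, which is all of `E`
    have horth : ∀ v : A.domain, inner 𝕜 (w - x) (A v + v) = 0 := by
      intro v
      rw [inner_sub_left, inner_add_right, inner_add_right, ← hadj ⟨w, hw⟩ v, ← hsymm x v,
        ← inner_add_left, ← inner_add_left, hx, add_comm, sub_self]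
    obtain ⟨v, hv⟩ := hsurj (w - x)
    have hwx : w - x = 0 := inner_self_eq_zero.mp (hv ▸ horth v)
    exact sub_eq_zero.mp hwx ▸ x.2
  exact (eq_of_le_of_domain_eq hle (le_antisymm hle.1 hdom)).symm

theorem eq_of_isFormalAdjoint {A B : E →ₗ.[𝕜] E} (hA : IsSelfAdjoint A) (hB : IsSelfAdjoint B)
    (h : A.IsFormalAdjoint B) : A = B := by
  have hAB : A ≤ B.adjoint := h.symm.le_adjoint hB.dense_domain
  have hBA : B ≤ A.adjoint := h.le_adjoint hA.dense_domain
  rw [isSelfAdjoint_def.mp hB] at hAB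
  rw [isSelfAdjoint_def.mp hA] at hBA
  exact le_antisymm hAB hBA

end LinearPMap

namespace ContinuousLinearMap

open scoped InnerProduct

variable {𝕜 E F : Type*} [RCLike 𝕜] [NormedAddCommGroup E] [InnerProductSpace 𝕜 E]
  [NormedAddCommGroup F] [InnerProductSpace 𝕜 F] [CompleteSpace E] [CompleteSpace F]
  {J : F →L[𝕜] E}

theorem injective_adjoint_of_denseRange (hJ : DenseRange J) : Function.Injective ⇑(J†) := by
  intro f g hfg
  refine hJ.eq_of_inner_left 𝕜 fun i => ?_
  rw [← adjoint_inner_left, hfg, adjoint_inner_left]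

theorem injective_self_comp_adjoint (hJ : DenseRange J) : Function.Injective (J ∘L J†) := by
  rw [coe_comp]
  exact (self_comp_adjoint_injective_iff J).mpr (injective_adjoint_of_denseRange hJ)

theorem denseRange_self_comp_adjoint (hJ : DenseRange J) : DenseRange (J ∘L J†) := by
  have hker : (J ∘L J†).ker = ⊥ := LinearMap.ker_eq_bot.mpr (injective_self_comp_adjoint hJ)
  have horth : (J ∘L J†).rangeᗮ = ⊥ := by
    rw [orthogonal_range, adjoint_comp, adjoint_adjoint, hker]
  rw [DenseRange, ← coe_coe, ← LinearMap.coe_range]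
  exact Submodule.dense_iff_topologicalClosure_eq_top.mpr
    (Submodule.topologicalClosure_eq_top_iff.mpr horth)

end ContinuousLinearMap

/-- Linearity in the second argument follows from `conj_symm`. -/
structure PositiveForm (H : Type*) [NormedAddCommGroup H] [InnerProductSpace ℂ H] where
  dom : Submodule ℂ H
  toFun : H → H → ℂ
  add_left : ∀ u u' v, u ∈ dom → u' ∈ dom → v ∈ dom → toFun (u + u') v = toFun u v + toFun u' v
  smul_left : ∀ (c : ℂ) u v, u ∈ dom → v ∈ dom → toFun (c • u) v = conj c * toFun u v
  conj_symm : ∀ u v, u ∈ dom → v ∈ dom → toFun u v = conj (toFun v u)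
  re_nonneg : ∀ u, u ∈ dom → 0 ≤ (toFun u u).re

noncomputable section

namespace PositiveForm

variable {H : Type*} [NormedAddCommGroup H] [InnerProductSpace ℂ H] (q : PositiveForm H)

instance : CoeFun (PositiveForm H) (fun _ => H → H → ℂ) := ⟨toFun⟩

def IsClosed : Prop :=
  ∀ un : ℕ → H, ∀ u : H, (∀ n, un n ∈ q.dom) →
    Filter.Tendsto un Filter.atTop (nhds u) →
    (∀ δ > (0 : ℝ), ∃ N, ∀ m ≥ N, ∀ n ≥ N, (q (un m - un n) (un m - un n)).re < δ) →
    u ∈ q.dom ∧ Filter.Tendsto (fun n => (q (un n - u) (un n - u)).re) Filter.atTop (nhds 0)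

/-- The form domain, to be equipped with the inner product `⟪u, v⟫ + q u v`. -/
def FormSpace : Type _ := q.dom

instance : AddCommGroup q.FormSpace := inferInstanceAs (AddCommGroup q.dom)
instance : Module ℂ q.FormSpace := inferInstanceAs (Module ℂ q.dom)

def incl : q.FormSpace →ₗ[ℂ] H := q.dom.subtype

lemma incl_mem (u : q.FormSpace) : q.incl u ∈ q.dom := (show q.dom from u).2

lemma incl_injective : Function.Injective q.incl := q.dom.injective_subtype

def toFormSpace (u : H) (hu : u ∈ q.dom) : q.FormSpace := (⟨u, hu⟩ : q.dom)

@[simp] lemma incl_toFormSpace (u : H) (hu : u ∈ q.dom) : q.incl (q.toFormSpace u hu) = u := rfl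

abbrev innerProductCore : InnerProductSpace.Core ℂ q.FormSpace where
  inner u v := inner ℂ (q.incl u) (q.incl v) + q (q.incl u) (q.incl v)
  conj_inner_symm u v := by
    rw [map_add, inner_conj_symm, ← q.conj_symm _ _ (q.incl_mem u) (q.incl_mem v)]
  re_inner_nonneg u := by
    rw [RCLike.re_to_complex, Complex.add_re]
    exact add_nonneg (by simpa using inner_self_nonneg (𝕜 := ℂ) (x := q.incl u))
      (q.re_nonneg _ (q.incl_mem u))
  add_left u u' v := by
    rw [map_add, inner_add_left, q.add_left _ _ _ (q.incl_mem u) (q.incl_mem u') (q.incl_mem v)]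
    ring
  smul_left u v c := by
    rw [map_smul, inner_smul_left, q.smul_left _ _ _ (q.incl_mem u) (q.incl_mem v)]
    ring
  definite u hu := by
    have hre := congrArg Complex.re hu
    rw [Complex.add_re, Complex.zero_re, ← RCLike.re_to_complex, inner_self_eq_norm_sq] at hre
    have hnorm : ‖q.incl u‖ ^ 2 = 0 := by
      linarith [sq_nonneg ‖q.incl u‖, q.re_nonneg _ (q.incl_mem u)]
    exact q.incl_injective (by simpa using hnorm)

instance : NormedAddCommGroup q.FormSpace :=
  InnerProductSpace.Core.toNormedAddCommGroup (cd := q.innerProductCore)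

instance : InnerProductSpace ℂ q.FormSpace := InnerProductSpace.ofCore q.innerProductCore.toCore

lemma inner_eq (u v : q.FormSpace) :
    inner ℂ u v = inner ℂ (q.incl u) (q.incl v) + q (q.incl u) (q.incl v) := rfl

lemma norm_sq_eq (u : q.FormSpace) :
    ‖u‖ ^ 2 = ‖q.incl u‖ ^ 2 + (q (q.incl u) (q.incl u)).re := by
  rw [← inner_self_eq_norm_sq (𝕜 := ℂ), inner_eq, map_add, inner_self_eq_norm_sq,
    RCLike.re_to_complex]

lemma norm_incl_le (u : q.FormSpace) : ‖q.incl u‖ ≤ ‖u‖ := by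
  refine (sq_le_sq₀ (norm_nonneg _) (norm_nonneg _)).mp ?_
  linarith [q.norm_sq_eq u, q.re_nonneg _ (q.incl_mem u)]

def inclCLM : q.FormSpace →L[ℂ] H :=
  q.incl.mkContinuous 1 fun u => by simpa using q.norm_incl_le u

@[simp] lemma inclCLM_apply (u : q.FormSpace) : q.inclCLM u = q.incl u := rfl

lemma denseRange_inclCLM (hD : Dense (q.dom : Set H)) : DenseRange q.inclCLM :=
  hD.denseRange_val

lemma dist_sq_eq (u v : q.FormSpace) :
    dist u v ^ 2 =
      ‖q.incl u - q.incl v‖ ^ 2 + (q (q.incl u - q.incl v) (q.incl u - q.incl v)).re := by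
  rw [dist_eq_norm, norm_sq_eq, map_sub]

open Filter Topology in
theorem completeSpace_of_isClosed [CompleteSpace H] (hq : q.IsClosed) :
    CompleteSpace q.FormSpace := by
  refine Metric.complete_of_cauchySeq_tendsto fun x hx => ?_
  obtain ⟨u, hu⟩ := cauchySeq_tendsto_of_complete (q.inclCLM.uniformContinuous.comp_cauchySeq hx)
  have hform_cauchy : ∀ δ > (0 : ℝ), ∃ N, ∀ m ≥ N, ∀ n ≥ N,
      (q (q.incl (x m) - q.incl (x n)) (q.incl (x m) - q.incl (x n))).re < δ := by
    intro δ hδ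
    obtain ⟨N, hN⟩ := Metric.cauchySeq_iff.mp hx (√δ) (Real.sqrt_pos.mpr hδ)
    refine ⟨N, fun m hm n hn => ?_⟩
    have hdist := (Real.lt_sqrt dist_nonneg).mp (hN m hm n hn)
    linarith [q.dist_sq_eq (x m) (x n), sq_nonneg ‖q.incl (x m) - q.incl (x n)‖]
  obtain ⟨huD, hform_tendsto⟩ := hq _ u (fun n => q.incl_mem (x n)) hu hform_cauchy
  refine ⟨q.toFormSpace u huD, tendsto_iff_dist_tendsto_zero.mpr ?_⟩
  have hnorm : Tendsto (fun n => ‖q.incl (x n) - u‖ ^ 2) atTop (𝓝 0) := by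
    simpa using (tendsto_iff_norm_sub_tendsto_zero.mp hu).pow 2
  have hdist : ∀ n, dist (x n) (q.toFormSpace u huD) =
      √(‖q.incl (x n) - u‖ ^ 2 + (q (q.incl (x n) - u) (q.incl (x n) - u)).re) := fun n => by
    rw [← Real.sqrt_sq dist_nonneg, q.dist_sq_eq, incl_toFormSpace]
  simpa [hdist] using (hnorm.add hform_tendsto).sqrt

def IsRepresentedBy (A : H →ₗ.[ℂ] H) : Prop :=
  (A.domain : Set H) ⊆ q.dom ∧ ∀ u : A.domain, ∀ v ∈ q.dom, q u v = inner ℂ (A u) v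

section Representation

variable {q}

lemma IsRepresentedBy.isFormalAdjoint {A B : H →ₗ.[ℂ] H} (hA : q.IsRepresentedBy A)
    (hB : q.IsRepresentedBy B) : A.IsFormalAdjoint B := by
  intro x y
  rw [← hA.2 x y (hB.1 y.2), q.conj_symm _ _ (hA.1 x.2) (hB.1 y.2), hB.2 y x (hA.1 x.2),
    inner_conj_symm]

lemma IsRepresentedBy.re_inner_nonneg {A : H →ₗ.[ℂ] H} (hA : q.IsRepresentedBy A)
    (u : A.domain) : 0 ≤ (inner ℂ (A u) (u : H)).re := by
  rw [← hA.2 u u (hA.1 u.2)]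
  exact q.re_nonneg _ (hA.1 u.2)

end Representation

section Operator

open scoped InnerProduct

variable [CompleteSpace H] [CompleteSpace q.FormSpace]

/-- `(Q + 1)⁻¹` for `Q = q.operator hD`. -/
def resolvent : H →L[ℂ] H := q.inclCLM ∘L q.inclCLM†

lemma resolvent_apply (f : H) : q.resolvent f = q.incl ((q.inclCLM†) f) := rfl

lemma resolvent_mem (f : H) : q.resolvent f ∈ q.dom := q.incl_mem _

lemma inner_resolvent_add_resolvent_eq_inner (f : H) {v : H} (hv : v ∈ q.dom) :
    inner ℂ (q.resolvent f) v + q (q.resolvent f) v = inner ℂ f v := by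
  have := ContinuousLinearMap.adjoint_inner_left q.inclCLM (q.toFormSpace v hv) f
  simpa [inner_eq, resolvent_apply] using this

lemma injective_resolvent (hD : Dense (q.dom : Set H)) : Function.Injective q.resolvent :=
  ContinuousLinearMap.injective_self_comp_adjoint (q.denseRange_inclCLM hD)

def operator (hD : Dense (q.dom : Set H)) : H →ₗ.[ℂ] H where
  domain := LinearMap.range (q.resolvent : H →ₗ[ℂ] H)
  toFun := ((LinearEquiv.ofInjective _ (q.injective_resolvent hD)).symm : _ →ₗ[ℂ] H) -
    (LinearMap.range (q.resolvent : H →ₗ[ℂ] H)).subtype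

variable (hD : Dense (q.dom : Set H))

lemma operator_apply_add_self (x : (q.operator hD).domain) :
    q.operator hD x + x = (LinearEquiv.ofInjective _ (q.injective_resolvent hD)).symm x :=
  sub_add_cancel _ _

lemma resolvent_operator_apply_add_self (x : (q.operator hD).domain) :
    q.resolvent (q.operator hD x + x) = x := by
  rw [operator_apply_add_self]
  exact LinearEquiv.ofInjective_symm_apply (f := (q.resolvent : H →ₗ[ℂ] H)) x

lemma operator_apply_resolvent_add (f : H) :
    q.operator hD ⟨q.resolvent f, LinearMap.mem_range_self _ f⟩ + q.resolvent f = f := by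
  rw [operator_apply_add_self]
  exact (LinearEquiv.ofInjective _ (q.injective_resolvent hD)).symm_apply_apply f

lemma dense_operator_domain : Dense ((q.operator hD).domain : Set H) := by
  show Dense (LinearMap.range (q.resolvent : H →ₗ[ℂ] H) : Set H)
  rw [LinearMap.coe_range, ContinuousLinearMap.coe_coe]
  exact ContinuousLinearMap.denseRange_self_comp_adjoint (q.denseRange_inclCLM hD)

lemma isRepresentedBy_operator : q.IsRepresentedBy (q.operator hD) := by
  refine ⟨?_, fun u v hv => ?_⟩
  · rintro _ ⟨f, rfl⟩
    exact q.resolvent_mem f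
  · have h := q.inner_resolvent_add_resolvent_eq_inner (q.operator hD u + u) hv
    rw [q.resolvent_operator_apply_add_self, inner_add_left] at h
    linear_combination h

theorem isSelfAdjoint_operator : IsSelfAdjoint (q.operator hD) :=
  LinearPMap.IsFormalAdjoint.isSelfAdjoint
    ((q.isRepresentedBy_operator hD).isFormalAdjoint (q.isRepresentedBy_operator hD))
    (q.dense_operator_domain hD) fun g => ⟨_, q.operator_apply_resolvent_add hD g⟩

end Operator

end PositiveForm

end

theorem friedrichs_extension_of_closed_positive_form_general
    {H : Type*} [NormedAddCommGroup H] [InnerProductSpace ℂ H] [CompleteSpace H]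
    (D : Submodule ℂ H) (q : H → H → ℂ)
    -- densely defined
    (hdense : Dense (D : Set H))
    -- sesquilinear on `D` (conjugate linear in the first entry, linear in the second)
    (hadd₁ : ∀ u u' v, u ∈ D → u' ∈ D → v ∈ D → q (u + u') v = q u v + q u' v)
    (hsmul₁ : ∀ (c : ℂ) u v, u ∈ D → v ∈ D → q (c • u) v = conj c * q u v)
    -- symmetric
    (hsymm : ∀ u v, u ∈ D → v ∈ D → q u v = conj (q v u))
    -- positive
    (hpos : ∀ u, u ∈ D → 0 ≤ (q u u).re)
    -- closed: `D` is complete for the form norm `‖·‖² + q[·]`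
    (hclosed : ∀ un : ℕ → H, ∀ u : H, (∀ n, un n ∈ D) →
      Filter.Tendsto un Filter.atTop (nhds u) →
      (∀ δ > (0 : ℝ), ∃ N, ∀ m ≥ N, ∀ n ≥ N, (q (un m - un n) (un m - un n)).re < δ) →
      u ∈ D ∧ Filter.Tendsto (fun n => (q (un n - u) (un n - u)).re) Filter.atTop (nhds 0)) :
    ∃! Q : H →ₗ.[ℂ] H,
      Dense (Q.domain : Set H) ∧ IsSelfAdjoint Q ∧
      (∀ u : Q.domain, 0 ≤ (inner ℂ (Q u) (u : H) : ℂ).re) ∧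
      (Q.domain : Set H) ⊆ (D : Set H) ∧
      (∀ u : Q.domain, ∀ v ∈ D, q (u : H) v = (inner ℂ (Q u) v : ℂ)) := by
  let form : PositiveForm H := ⟨D, q, hadd₁, hsmul₁, hsymm, hpos⟩
  have := form.completeSpace_of_isClosed hclosed
  have hrep := form.isRepresentedBy_operator hdense
  refine ⟨form.operator hdense, ⟨form.dense_operator_domain hdense,
    form.isSelfAdjoint_operator hdense, hrep.re_inner_nonneg, hrep⟩, ?_⟩
  rintro Q ⟨-, hQ, -, hQrep⟩
  exact LinearPMap.eq_of_isFormalAdjoint hQ (form.isSelfAdjoint_operator hdense)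
    (PositiveForm.IsRepresentedBy.isFormalAdjoint (q := form) hQrep hrep)

/-- **Friedrichs extension / Kato representation theorem.**
Let `H` be a Hilbert space and `q` a densely defined, closed, positive, symmetric sesquilinear
form on `H` with form domain `D`.  Then there exists a unique densely defined self-adjoint
positive operator `Q` with domain contained in `D` such that `q[u, v] = ⟪Q u, v⟫` for all
`u ∈ dom Q` and `v ∈ D`. -/
theorem friedrichs_extension_of_closed_positive_form
    {H : Type*} [NormedAddCommGroup H] [InnerProductSpace ℂ H] [CompleteSpace H]
    (D : Submodule ℂ H) (q : H → H → ℂ)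
    -- densely defined
    (hdense : Dense (D : Set H))
    -- sesquilinear on `D` (conjugate linear in the first entry, linear in the second)
    (hadd₁ : ∀ u u' v, u ∈ D → u' ∈ D → v ∈ D → q (u + u') v = q u v + q u' v)
    (hadd₂ : ∀ u v v', u ∈ D → v ∈ D → v' ∈ D → q u (v + v') = q u v + q u v')
    (hsmul₁ : ∀ (c : ℂ) u v, u ∈ D → v ∈ D → q (c • u) v = conj c * q u v)
    (hsmul₂ : ∀ (c : ℂ) u v, u ∈ D → v ∈ D → q u (c • v) = c * q u v)
    -- symmetric
    (hsymm : ∀ u v, u ∈ D → v ∈ D → q u v = conj (q v u))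
    -- positive
    (hpos : ∀ u, u ∈ D → 0 ≤ (q u u).re)
    -- closed: `D` is complete for the form norm `‖·‖² + q[·]`
    (hclosed : ∀ un : ℕ → H, ∀ u : H, (∀ n, un n ∈ D) →
      Filter.Tendsto un Filter.atTop (nhds u) →
      (∀ δ > (0 : ℝ), ∃ N, ∀ m ≥ N, ∀ n ≥ N, (q (un m - un n) (un m - un n)).re < δ) →
      u ∈ D ∧ Filter.Tendsto (fun n => (q (un n - u) (un n - u)).re) Filter.atTop (nhds 0)) :
    ∃! Q : H →ₗ.[ℂ] H,
      Dense (Q.domain : Set H) ∧ IsSelfAdjoint Q ∧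
      (∀ u : Q.domain, 0 ≤ (inner ℂ (Q u) (u : H) : ℂ).re) ∧
      (Q.domain : Set H) ⊆ (D : Set H) ∧
      (∀ u : Q.domain, ∀ v ∈ D, q (u : H) v = (inner ℂ (Q u) v : ℂ)) :=
  friedrichs_extension_of_closed_positive_form_general D q hdense hadd₁ hsmul₁ hsymm hpos hclosed
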